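/- arXiv:2207.12022 — 2 statements merged into one kernel-verified Lean document; each statement's English description precedes it below -/
import Mathlib

section
/- The coalitional game G(N, J) with coalition cost J(S) = Σ_{i∈S} λ_{b_i}·B_i + λ_h·(X_S − B_S)^+ − μ_h·(B_S − X_S)^+ + λ_l·(Y_S + B_S), where X_S = Σ_{i∈S} X_i, Y_S = Σ_{i∈S} Y_i, B_S = Σ_{i∈S} B_i, is subadditive: for any disjoint coalitions S, T ⊆ N, J(S ∪ T) ≤ J(S) + J(T), provided λ_h ≥ μ_h. -/
/-- Coalition cost J(S). -/
noncomputable def coalCost {ι : Type*} [DecidableEq ι] (lh mh ll : ℝ) (lb X Y B : ι → ℝ)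
    (S : Finset ι) : ℝ :=
  ∑ i ∈ S, lb i * B i
    + lh * max (∑ i ∈ S, X i - ∑ i ∈ S, B i) 0
    - mh * max (∑ i ∈ S, B i - ∑ i ∈ S, X i) 0
    + ll * (∑ i ∈ S, Y i + ∑ i ∈ S, B i)

lemma pm_subadd (lh mh : ℝ) (hmh : 0 ≤ mh) (hprice : mh ≤ lh) (a b : ℝ) :
    lh * max (a + b) 0 - mh * max (-(a + b)) 0 ≤
      (lh * max a 0 - mh * max (-a) 0) + (lh * max b 0 - mh * max (-b) 0) := by
  have h1 : ∀ x : ℝ, lh * max x 0 - mh * max (-x) 0 = mh * x + (lh - mh) * max x 0 := by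
    intro x
    rcases le_total x 0 with h | h
    · rw [max_eq_right h, max_eq_left (by linarith)]; ring
    · rw [max_eq_left h, max_eq_right (by linarith)]; ring
  rw [h1, h1, h1]
  have h2 : max (a + b) 0 ≤ max a 0 + max b 0 :=
    max_le (add_le_add (le_max_left a 0) (le_max_left b 0))
      (add_nonneg (le_max_right a 0) (le_max_right b 0))
  nlinarith [mul_le_mul_of_nonneg_left h2 (by linarith : (0:ℝ) ≤ lh - mh)]

/-- the coalitional game is subadditive. -/
theorem coalCost_subadditive {ι : Type*} [DecidableEq ι]
    (lh mh ll : ℝ) (lb X Y B : ι → ℝ)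
    (hlh : 0 ≤ lh) (hmh : 0 ≤ mh) (hll : 0 ≤ ll) (hprice : mh ≤ lh)
    (hlb : ∀ i, 0 ≤ lb i) (hX : ∀ i, 0 ≤ X i) (hY : ∀ i, 0 ≤ Y i) (hB : ∀ i, 0 ≤ B i)
    (N S T : Finset ι) (hS : S ⊆ N) (hT : T ⊆ N) (hdisj : Disjoint S T) :
    coalCost lh mh ll lb X Y B (S ∪ T) ≤
      coalCost lh mh ll lb X Y B S + coalCost lh mh ll lb X Y B T := by
  unfold coalCost
  rw [Finset.sum_union hdisj, Finset.sum_union hdisj, Finset.sum_union hdisj,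
    Finset.sum_union hdisj]
  set a := ∑ i ∈ S, X i - ∑ i ∈ S, B i with ha
  set b := ∑ i ∈ T, X i - ∑ i ∈ T, B i with hb
  have key := pm_subadd lh mh hmh hprice a b
  have e1 : ∑ i ∈ S, X i + ∑ i ∈ T, X i - (∑ i ∈ S, B i + ∑ i ∈ T, B i) = a + b := by
    rw [ha, hb]; ring
  have e2 : ∑ i ∈ S, B i + ∑ i ∈ T, B i - (∑ i ∈ S, X i + ∑ i ∈ T, X i) = -(a + b) := by
    rw [ha, hb]; ring
  have e3 : ∑ i ∈ S, B i - ∑ i ∈ S, X i = -a := by rw [ha]; ring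
  have e4 : ∑ i ∈ T, B i - ∑ i ∈ T, X i = -b := by rw [hb]; ring
  rw [e1, e2, e3, e4]
  nlinarith [key]
end

section
/- In the case X_S ≥ B_S, X_T < B_T, and X_S + X_T ≥ B_S + B_T, the strict subadditivity gap equals (λ_h − μ_h)·(B_T − X_T): namely J(S) + J(T) − J(S ∪ T) = (λ_h − μ_h)·(B_T − X_T) ≥ 0 when λ_h ≥ μ_h. -/
/-- the subadditivity gap in the mixed case. -/
theorem coalCost_gap {ι : Type*} [DecidableEq ι]
    (lh mh ll : ℝ) (lb X Y B : ι → ℝ)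
    (hlh : 0 ≤ lh) (hmh : 0 ≤ mh) (hll : 0 ≤ ll) (hprice : mh ≤ lh)
    (hlb : ∀ i, 0 ≤ lb i) (hX : ∀ i, 0 ≤ X i) (hY : ∀ i, 0 ≤ Y i) (hB : ∀ i, 0 ≤ B i)
    (N S T : Finset ι) (hS : S ⊆ N) (hT : T ⊆ N) (hdisj : Disjoint S T)
    (h1 : ∑ i ∈ S, B i ≤ ∑ i ∈ S, X i)
    (h2 : ∑ i ∈ T, X i < ∑ i ∈ T, B i)
    (h3 : ∑ i ∈ S, B i + ∑ i ∈ T, B i ≤ ∑ i ∈ S, X i + ∑ i ∈ T, X i) :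
    coalCost lh mh ll lb X Y B S + coalCost lh mh ll lb X Y B T
        - coalCost lh mh ll lb X Y B (S ∪ T)
      = (lh - mh) * (∑ i ∈ T, B i - ∑ i ∈ T, X i) ∧
    0 ≤ (lh - mh) * (∑ i ∈ T, B i - ∑ i ∈ T, X i) := by
  constructor
  · unfold coalCost
    rw [Finset.sum_union hdisj, Finset.sum_union hdisj, Finset.sum_union hdisj,
        Finset.sum_union hdisj]
    rw [max_eq_left (by linarith), max_eq_right (by linarith),
        max_eq_right (by linarith), max_eq_left (by linarith),
        max_eq_left (by linarith), max_eq_right (by linarith)]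
    ring
  · have := h2.le
    nlinarith
end
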